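/- The rank-2 plactic monoid P₂ = ⟨a, b | aba = baa, bab = bba⟩ is an automaton monoid. Precisely, let Γ = {𝟙, a, b, c} (c standing for the column ba) and let N̄ : Γ×Γ → Γ×Γ be defined by N̄(b,a) = (𝟙,c), N̄(c,a) = (a,c), N̄(c,b) = (b,c), N̄(x,𝟙) = (𝟙,x) for x ∈ {a,b,c}, and N̄(x,y) = (x,y) for all other pairs. Let φ : Γ* → P₂ be the monoid homomorphism with φ(𝟙) = 1, φ(a) = a, φ(b) = b, φ(c) = b*a. Then for all words u, v over Γ, the production functions σ_u and σ_v are equal as functions List Γ → List Γ if and only if φ(u) = φ(v); hence the monoid generated by this Mealy automaton is isomorphic to P₂. -/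

import Mathlib

namespace Stmt15

variable {α : Type}

/-- Production function of the Mealy automaton associated with
`N̄(a,b) = (τ_a(b), σ_b(a))`: `σ_x([]) = []`,
`σ_x(i :: s) = σ_x(i) :: σ_{τ_i(x)}(s)`. -/
def prodFn (Nb : α → α → α × α) : α → List α → List α
  | _, [] => []
  | x, i :: s => (Nb i x).2 :: prodFn Nb ((Nb i x).1) s

/-- Production function of a word `u = x₁⋯xₙ`: `σ_u = σ_{xₙ} ∘ ⋯ ∘ σ_{x₁}`. -/
def prodWord (Nb : α → α → α × α) : List α → List α → List α
  | [], s => s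
  | x :: u, s => prodWord Nb u (prodFn Nb x s)

/-- The generators `a, b` of the rank-2 plactic monoid. -/
inductive X : Type
  | a : X
  | b : X
  deriving DecidableEq

instance instFintypeX : Fintype X := ⟨{X.a, X.b}, fun x => by cases x <;> simp⟩

/-- The defining relations of the rank-2 plactic monoid
`P₂ = ⟨a, b | aba = baa, bab = bba⟩`. -/
def placticRel : FreeMonoid X → FreeMonoid X → Prop :=
  fun u v =>
    (u = FreeMonoid.ofList [X.a, X.b, X.a] ∧ v = FreeMonoid.ofList [X.b, X.a, X.a]) ∨
      (u = FreeMonoid.ofList [X.b, X.a, X.b] ∧ v = FreeMonoid.ofList [X.b, X.b, X.a])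

/-- The rank-2 plactic monoid `P₂`. -/
def P2 : Type := (conGen placticRel).Quotient

instance : Monoid P2 := by unfold P2; infer_instance

/-- The image in `P₂` of a word over the generators. -/
def P2mk (l : List X) : P2 := (conGen placticRel).mk' (FreeMonoid.ofList l)

/-- The alphabet `Γ = {𝟙, a, b, c}`, `c` standing for the column `ba`. -/
inductive Γ : Type
  | one : Γ
  | a : Γ
  | b : Γ
  | c : Γ
  deriving DecidableEq

instance instFintypeΓ : Fintype Γ := ⟨{Γ.one, Γ.a, Γ.b, Γ.c}, fun x => by cases x <;> simp⟩

/-- The two-letter normalisation of `P₂` on the columns `Γ = {𝟙, a, b, c}`: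
`N̄(b,a) = (𝟙,c)`, `N̄(c,a) = (a,c)`, `N̄(c,b) = (b,c)`, `N̄(x,𝟙) = (𝟙,x)` for
`x ∈ {a,b,c}`, identity otherwise. -/
def placticNb : Γ → Γ → Γ × Γ
  | .b, .a => (.one, .c)
  | .c, .a => (.a, .c)
  | .c, .b => (.b, .c)
  | .a, .one => (.one, .a)
  | .b, .one => (.one, .b)
  | .c, .one => (.one, .c)
  | x, y => (x, y)

/-- The evaluation homomorphism `φ : Γ* → P₂` with `φ(𝟙) = 1`, `φ(a) = a`, `φ(b) = b`,
`φ(c) = b*a`. -/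
def phi : FreeMonoid Γ →* P2 :=
  FreeMonoid.lift fun x : Γ =>
    match x with
    | .one => 1
    | .a => P2mk [X.a]
    | .b => P2mk [X.b]
    | .c => P2mk [X.b] * P2mk [X.a]

/-!
`N̄` preserves `φ`, i.e. `φ(i) φ(x) = φ(y) φ(o)` when `N̄(i, x) = (y, o)`. Hence feeding
a letter `i` through the states `u` of the automaton produces new states `u'` and an output `o`
with `φ(i) φ(u) = φ(u') φ(o)`. Feeding `𝟙` sends the first state to the output and turns it into
`𝟙`, so after `|u|` letters `𝟙` the states are all `𝟙` and `φ(u)` is the product of the outputs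
`σ_u(𝟙ⁿ)` in reverse order: `σ_u` determines `φ(u)`. Conversely, the production functions satisfy
`σ_𝟙 = id`, `σ_c = σ_{ba}` and the two plactic relations, all witnessed by a single finite
bisimulation, so `u ↦ σ_u` factors through `φ`.
-/

open MulOpposite FreeMonoid

section Mealy

variable (Nb : α → α → α × α)

def cascade : List α → α → List α × α
  | [], i => ([], i)
  | x :: u, i =>
    let q := cascade u (Nb i x).2
    ((Nb i x).1 :: q.1, q.2)

theorem length_cascade_fst (u : List α) (i : α) : (cascade Nb u i).1.length = u.length := by
  induction u generalizing i with
  | nil => rfl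
  | cons x u ih => simp only [cascade, List.length_cons, ih]

theorem prodWord_nil_right (u : List α) : prodWord Nb u [] = [] := by
  induction u with
  | nil => rfl
  | cons x u ih => exact ih

theorem prodWord_cons_right (u : List α) (i : α) (s : List α) :
    prodWord Nb u (i :: s) = (cascade Nb u i).2 :: prodWord Nb (cascade Nb u i).1 s := by
  induction u generalizing i s with
  | nil => rfl
  | cons x u ih => exact ih _ _

theorem prodWord_eq_of_bisimulation (R : List α → List α → Prop)
    (hR : ∀ u v, R u v → ∀ i,
      (cascade Nb u i).2 = (cascade Nb v i).2 ∧ R (cascade Nb u i).1 (cascade Nb v i).1)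
    {u v : List α} (huv : R u v) : prodWord Nb u = prodWord Nb v := by
  funext s
  induction s generalizing u v with
  | nil => rw [prodWord_nil_right, prodWord_nil_right]
  | cons i s ih =>
    obtain ⟨hout, hnext⟩ := hR u v huv i
    rw [prodWord_cons_right, prodWord_cons_right, hout, ih hnext]

/-- Opposite monoid because `σ_{uv} = σ_v ∘ σ_u`. -/
def prodHom : FreeMonoid α →* (Function.End (List α))ᵐᵒᵖ :=
  FreeMonoid.lift fun x => op (prodFn Nb x)

theorem prodHom_ofList (u : List α) : prodHom Nb (ofList u) = op (prodWord Nb u) := by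
  induction u with
  | nil => rfl
  | cons x u ih =>
    rw [ofList_cons, map_mul, ih]
    rfl

end Mealy

/-- The first four pairs are the identities needed (`σ_𝟙 = id`, `σ_{ba} = σ_c` and the plactic
relations); the others close the list under `cascade`. -/
def placticBisimulation : List (List Γ × List Γ) :=
  [([.one], []),
  ([.b, .a], [.c]),
  ([.a, .b, .a], [.b, .a, .a]),
  ([.b, .a, .b], [.b, .b, .a]),
  ([.a, .a, .one], [.a, .one, .a]),
  ([.a, .one], [.a]),
  ([.a, .one, .a], [.a, .a, .one]),
  ([.a, .one, .b], [.a, .b, .one]),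
  ([.b, .one], [.b]),
  ([.b, .one, .b], [.b, .b, .one]),
  ([.one, .a, .one], [.a, .one, .one]),
  ([.one, .a, .one], [.one, .one, .a]),
  ([.one, .b, .a], [.b, .one, .a]),
  ([.one, .b, .one], [.b, .one, .one]),
  ([.one, .one], [.one]),
  ([.one, .one, .a], [.one, .a, .one]),
  ([.one, .one, .b], [.one, .b, .one]),
  ([.one, .one, .one], [.one, .one, .one])]

theorem placticBisimulation_closed : ∀ p ∈ placticBisimulation, ∀ i : Γ,
    (cascade placticNb p.1 i).2 = (cascade placticNb p.2 i).2 ∧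
      ((cascade placticNb p.1 i).1, (cascade placticNb p.2 i).1) ∈ placticBisimulation := by
  decide

theorem prodWord_eq_of_mem_placticBisimulation {u v : List Γ}
    (h : (u, v) ∈ placticBisimulation) : prodWord placticNb u = prodWord placticNb v :=
  prodWord_eq_of_bisimulation placticNb (fun u v => (u, v) ∈ placticBisimulation)
    (fun u v huv => placticBisimulation_closed (u, v) huv) h

theorem prodHom_ofList_eq_of_mem_placticBisimulation {u v : List Γ} (h : (u, v) ∈ placticBisimulation) :
    prodHom placticNb (ofList u) = prodHom placticNb (ofList v) := by
  rw [prodHom_ofList, prodHom_ofList, prodWord_eq_of_mem_placticBisimulation h]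

theorem prodFn_one (s : List Γ) : prodFn placticNb .one s = s :=
  congrFun (prodWord_eq_of_mem_placticBisimulation (u := [.one]) (v := []) (by decide)) s

theorem prodWord_one_cons (u : List Γ) : prodWord placticNb (.one :: u) = prodWord placticNb u :=
  funext fun s => congrArg (prodWord placticNb u) (prodFn_one s)

section Lift

variable {M : Type*} [Monoid M] (f : X → M) (haba : f .a * f .b * f .a = f .b * f .a * f .a)
  (hbab : f .b * f .a * f .b = f .b * f .b * f .a)

def P2.lift : P2 →* M :=
  Con.lift _ (FreeMonoid.lift f) <| Con.conGen_le.mpr <| by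
    rintro _ _ (⟨rfl, rfl⟩ | ⟨rfl, rfl⟩)
    · simpa [Con.ker_rel, mul_assoc] using haba
    · simpa [Con.ker_rel, mul_assoc] using hbab

theorem P2.lift_P2mk_singleton (x : X) : P2.lift f haba hbab (P2mk [x]) = f x :=
  Con.lift_mk' _ _

end Lift

theorem P2mk_append (l l' : List X) : P2mk (l ++ l') = P2mk l * P2mk l' :=
  map_mul (conGen placticRel).mk' _ _

theorem P2mk_aba : P2mk [.a, .b, .a] = P2mk [.b, .a, .a] :=
  (Con.eq _).mpr (ConGen.Rel.of _ _ (Or.inl ⟨rfl, rfl⟩))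

theorem P2mk_bab : P2mk [.b, .a, .b] = P2mk [.b, .b, .a] :=
  (Con.eq _).mpr (ConGen.Rel.of _ _ (Or.inr ⟨rfl, rfl⟩))

theorem phi_of_mul_phi_of_placticNb (i x : Γ) :
    phi (of i) * phi (of x) = phi (of (placticNb i x).1) * phi (of (placticNb i x).2) := by
  have hca : phi (of .c) * phi (of .a) = phi (of .a) * phi (of .c) := by
    simp only [phi, lift_eval_of, ← P2mk_append, List.cons_append, List.nil_append, P2mk_aba]
  have hcb : phi (of .c) * phi (of .b) = phi (of .b) * phi (of .c) := by
    simp only [phi, lift_eval_of, ← P2mk_append, List.cons_append, List.nil_append, P2mk_bab]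
  cases i <;> cases x <;> first
    | rfl
    | exact hca
    | exact hcb

theorem phi_of_mul_phi_ofList_cascade (i : Γ) (u : List Γ) :
    phi (of i) * phi (ofList u) =
      phi (ofList (cascade placticNb u i).1) * phi (of (cascade placticNb u i).2) := by
  induction u generalizing i with
  | nil => simp [cascade]
  | cons x u ih =>
    simp only [cascade, ofList_cons, map_mul]
    rw [← mul_assoc, phi_of_mul_phi_of_placticNb, mul_assoc, ih, mul_assoc]

theorem phi_of_one : phi (of Γ.one) = 1 := rfl

theorem phi_ofList_replicate_one (n : ℕ) : phi (ofList (List.replicate n Γ.one)) = 1 := by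
  induction n with
  | zero => rfl
  | succ n ih => rw [List.replicate_succ, ofList_cons, map_mul, ih, mul_one, phi_of_one]

theorem cascade_cons_one (x : Γ) (u : List Γ) :
    cascade placticNb (x :: u) .one =
      (.one :: (cascade placticNb u x).1, (cascade placticNb u x).2) := by
  cases x <;> rfl

theorem phi_eq_phi_reverse_prodWord_replicate_one (n : ℕ) (u : List Γ) (hu : u.length ≤ n) :
    phi (ofList u) = phi (ofList (prodWord placticNb u (List.replicate n .one)).reverse) := by
  induction n generalizing u with
  | zero => simp_all [prodWord]
  | succ n ih =>
    cases u with
    | nil => simp [prodWord, phi_ofList_replicate_one]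
    | cons x u =>
      have hstep := phi_of_mul_phi_ofList_cascade .one (x :: u)
      simp only [cascade_cons_one] at hstep
      rw [ofList_cons Γ.one, map_mul, phi_of_one, one_mul, one_mul] at hstep
      have hlen : (cascade placticNb u x).1.length ≤ n := by
        simpa [length_cascade_fst] using hu
      rw [hstep, ih _ hlen, List.replicate_succ, prodWord_cons_right, cascade_cons_one,
        prodWord_one_cons, List.reverse_cons, ofList_append, map_mul, ofList_singleton]

def X.toΓ : X → Γ
  | .a => .a
  | .b => .b

def P2.toEnd : P2 →* (Function.End (List Γ))ᵐᵒᵖ :=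
  P2.lift (fun x => prodHom placticNb (of x.toΓ))
    (by simp only [← map_mul]; exact prodHom_ofList_eq_of_mem_placticBisimulation (u := [.a, .b, .a]) (by decide))
    (by simp only [← map_mul]; exact prodHom_ofList_eq_of_mem_placticBisimulation (u := [.b, .a, .b]) (by decide))

theorem P2.toEnd_P2mk_singleton (x : X) : P2.toEnd (P2mk [x]) = prodHom placticNb (of x.toΓ) :=
  P2.lift_P2mk_singleton _ _ _ x

theorem P2.toEnd_comp_phi : P2.toEnd.comp phi = prodHom placticNb := by
  refine FreeMonoid.hom_eq fun x => ?_
  cases x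
  · exact (prodHom_ofList_eq_of_mem_placticBisimulation (u := [.one]) (v := []) (by decide)).symm
  · exact P2.toEnd_P2mk_singleton X.a
  · exact P2.toEnd_P2mk_singleton X.b
  · show P2.toEnd (P2mk [.b] * P2mk [.a]) = _
    rw [map_mul, P2.toEnd_P2mk_singleton, P2.toEnd_P2mk_singleton, ← map_mul]
    exact prodHom_ofList_eq_of_mem_placticBisimulation (u := [.b, .a]) (v := [.c]) (by decide)

/-- Example `ex-plactic`: the rank-2 plactic monoid `P₂` is an
automaton monoid: two words over `Γ` induce the same production function of the Mealy
automaton iff they have the same image under `φ` in `P₂`; hence the monoid generated by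
this Mealy automaton is isomorphic to `P₂`. -/
theorem plactic_automaton_monoid :
    ∀ u v : List Γ, prodWord placticNb u = prodWord placticNb v ↔
      phi (FreeMonoid.ofList u) = phi (FreeMonoid.ofList v) := by
  intro u v
  constructor
  · intro h
    rw [phi_eq_phi_reverse_prodWord_replicate_one (u.length + v.length) u (by omega),
      phi_eq_phi_reverse_prodWord_replicate_one (u.length + v.length) v (by omega), h]
  · intro h
    apply op_injective
    rw [← prodHom_ofList, ← prodHom_ofList, ← P2.toEnd_comp_phi]
    exact congrArg P2.toEnd h

end Stmt15
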